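/- For every n ≥ 0, ρ-almost everywhere on the event {D_n > 0} one has E_ρ[D_{n+1} | G_n] ≤ D_n; that is, the vertex-distance process (D_n) satisfies the supermartingale inequality at every time when the two paths are at distinct vertices. -/

import Mathlib

/-
Conditionally on `G_n` the two paths sit at vertices `k ≠ k'` of level `n` and pick their next
edge labels `a, b` independently and uniformly in `Fin (n + 2)`: `G_n` is generated by the finite
partition into products of length-`n` cylinders, and the symmetric measure splits each cylinder
evenly among its `n + 2` one-step refinements. So `E[D_{n+1} | G_n]` is the average of
`|kStep k a - kStep k' b|`. For `k < k'` the order of the two paths is preserved, and pairing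
`(a, b)` with `(b, a)` bounds each pair of terms by `2 (k' - k)`, because a label that makes the
upper path turn right makes the lower one turn right too.
-/

open MeasureTheory Filter
open scoped ENNReal

/-- The Euler path space: a point is an infinite edge path in the Euler graph,
`x n : Fin (n+2)` being the label of the edge chosen from level `n` to level `n+1`. -/
abbrev EulerPath : Type := ∀ n : ℕ, Fin (n + 2)

/-- Vertex labels: `kv x n` is the `k` with the path `x` passing through vertex `(n,k)`.
A label `(x n : ℕ) ≤ kv x n` is a left turn (edge to `(n+1, kv x n)`), a larger label
is a right turn (edge to `(n+1, kv x n + 1)`). -/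
def kv (x : EulerPath) : ℕ → ℕ
  | 0 => 0
  | n + 1 => if (x n : ℕ) ≤ kv x n then kv x n else kv x n + 1

/-- The symmetric measure: the product over `n` of the uniform probability measures on
`Fin (n+2)`, characterized as the probability measure giving each cylinder of length `n`
the measure `∏_{i<n} 1/(i+2)`. -/
def IsSymmetricMeasure (η : Measure EulerPath) : Prop :=
  IsProbabilityMeasure η ∧
    ∀ (n : ℕ) (c : EulerPath),
      η {x | ∀ i < n, x i = c i} = ∏ i ∈ Finset.range n, ((i : ℝ≥0∞) + 2)⁻¹

/- Below, `η.prod η` plays the role of the product measure `ρ = η × η` on `X × X`. -/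

/-- The vertex distance `D_n(x,x') = |k_n(x) - k_n(x')|` (an integer, viewed in `ℝ`). -/
def D (n : ℕ) (p : EulerPath × EulerPath) : ℝ :=
  ((|(kv p.1 n : ℤ) - (kv p.2 n : ℤ)| : ℤ) : ℝ)

/-- `G_n`: the σ-algebra on `X × X` generated by the coordinate pairs
`(x_0,x'_0), …, (x_{n-1},x'_{n-1})`. -/
def pairAlg (n : ℕ) : MeasurableSpace (EulerPath × EulerPath) :=
  ⨆ i : Fin n, MeasurableSpace.comap (fun p => (p.1 i, p.2 i)) inferInstance

/-- The filtration `(G_n)` on `X × X`. -/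
def pairFil : Filtration ℕ (inferInstance : MeasurableSpace (EulerPath × EulerPath)) where
  seq := pairAlg
  mono' := by
    intro i j hij
    exact iSup_le fun v => le_iSup_of_le (⟨v.1, lt_of_lt_of_le v.2 hij⟩ : Fin j) le_rfl
  le' := by
    intro i
    refine iSup_le fun v => Measurable.comap_le ?_
    exact ((measurable_pi_apply _).comp measurable_fst).prodMk
      ((measurable_pi_apply _).comp measurable_snd)


section FiniteConditioning

variable {Ω β : Type*} [mβ : MeasurableSpace β] {π : Ω → β}

theorem Function.FactorsThrough.measurable_comap [DiscreteMeasurableSpace β] {γ : Type*}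
    [MeasurableSpace γ] [Nonempty γ] {g : Ω → γ} (hg : g.FactorsThrough π) :
    Measurable[mβ.comap π] g := by
  rw [← hg.extend_comp fun _ => Classical.arbitrary γ]
  exact Measurable.of_discrete.comp (comap_measurable π)

variable [MeasurableSpace Ω] {μ : Measure Ω} {E : Type*} [NormedAddCommGroup E]

theorem Function.FactorsThrough.integrable [DiscreteMeasurableSpace β] [Finite β]
    [IsFiniteMeasure μ] {g : Ω → E} (hπ : Measurable π) (hg : g.FactorsThrough π) :
    Integrable g μ := by
  rw [← hg.extend_comp (0 : β → E)]
  exact Integrable.of_finite.comp_measurable hπ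

theorem setIntegral_eq_sum_setIntegral_inter_fiber [NormedSpace ℝ E] [Fintype β]
    [MeasurableSingletonClass β] (hπ : Measurable π) {f : Ω → E} (hf : Integrable f μ)
    {s : Set Ω} (hs : MeasurableSet s) :
    ∫ ω in s, f ω ∂μ = ∑ b, ∫ ω in s ∩ π ⁻¹' {b}, f ω ∂μ := by
  have hs_eq : s = ⋃ b, s ∩ π ⁻¹' {b} := by ext; simp
  conv_lhs => rw [hs_eq]
  refine integral_iUnion_fintype (fun b => hs.inter (hπ (measurableSet_singleton b)))
    (fun b b' hbb' => ?_) fun _ => hf.integrableOn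
  exact ((Set.disjoint_singleton.2 hbb').preimage π).mono Set.inter_subset_right
    Set.inter_subset_right

theorem condExp_comap_ae_eq_of_setIntegral_fiber [DiscreteMeasurableSpace β] [Finite β]
    [IsFiniteMeasure μ] (hπ : Measurable π) {f g : Ω → ℝ} (hf : Integrable f μ)
    (hg : g.FactorsThrough π)
    (hfib : ∀ ω, ∫ x in π ⁻¹' {π ω}, f x ∂μ = μ.real (π ⁻¹' {π ω}) * g ω) :
    μ[f | mβ.comap π] =ᵐ[μ] g := by
  have := Fintype.ofFinite β
  have hfiber : ∀ b, ∫ x in π ⁻¹' {b}, g x ∂μ = ∫ x in π ⁻¹' {b}, f x ∂μ := by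
    intro b
    rcases (π ⁻¹' {b}).eq_empty_or_nonempty with hb | ⟨ω, rfl : π ω = b⟩
    · simp [hb]
    · rw [hfib, setIntegral_congr_fun (hπ (measurableSet_singleton _)) fun _ hx => hg hx,
        setIntegral_const, smul_eq_mul]
  refine (ae_eq_condExp_of_forall_setIntegral_eq hπ.comap_le hf
    (fun _ _ _ => (hg.integrable hπ).integrableOn) ?_
    hg.measurable_comap.aestronglyMeasurable).symm
  rintro _ ⟨t, -, rfl⟩ -
  have ht : MeasurableSet (π ⁻¹' t) := hπ (DiscreteMeasurableSpace.forall_measurableSet t)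
  rw [setIntegral_eq_sum_setIntegral_inter_fiber hπ (hg.integrable hπ) ht,
    setIntegral_eq_sum_setIntegral_inter_fiber hπ hf ht]
  refine Finset.sum_congr rfl fun b _ => ?_
  by_cases hb : b ∈ t
  · rw [Set.inter_eq_right.2 (Set.preimage_mono (Set.singleton_subset_iff.2 hb)), hfiber]
  · rw [((Set.disjoint_singleton_right.2 hb).preimage π).inter_eq]
    simp

end FiniteConditioning

theorem sum_sum_le_card_sq_mul_of_add_swap_le {α : Type*} [Fintype α] {f : α → α → ℝ} {C : ℝ}
    (h : ∀ a b, f a b + f b a ≤ 2 * C) : ∑ a, ∑ b, f a b ≤ Fintype.card α ^ 2 * C := by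
  have hsym : 2 * ∑ a, ∑ b, f a b = ∑ a, ∑ b, (f a b + f b a) := by
    rw [two_mul]
    nth_rewrite 2 [Finset.sum_comm]
    simp only [Finset.sum_add_distrib]
  have hle : ∑ a, ∑ b, (f a b + f b a) ≤ ∑ _a : α, ∑ _b : α, 2 * C := by
    gcongr with a _ b _
    exact h a b
  simp only [Finset.sum_const, Finset.card_univ, nsmul_eq_mul] at hle
  linarith

namespace EulerPath

def kStep (k a : ℕ) : ℕ := if a ≤ k then k else k + 1

theorem kv_succ (x : EulerPath) (n : ℕ) : kv x (n + 1) = kStep (kv x n) (x n) := rfl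

theorem kStep_add_le_add_kStep {k k' : ℕ} (h : k ≤ k') (a : ℕ) :
    kStep k' a + k ≤ kStep k a + k' := by
  unfold kStep; split_ifs <;> omega

theorem kStep_le_kStep {k k' : ℕ} (h : k < k') (a b : ℕ) : kStep k a ≤ kStep k' b := by
  unfold kStep; split_ifs <;> omega

theorem dist_kStep_add_dist_kStep_swap_le {k k' : ℕ} (h : k < k') (a b : ℕ) :
    dist (kStep k a) (kStep k' b) + dist (kStep k b) (kStep k' a) ≤ 2 * dist k k' := by
  have hdist : ∀ {i j : ℕ}, i ≤ j → dist i j = (j : ℝ) - i := fun hij => by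
    rw [Nat.dist_eq, abs_sub_comm, abs_of_nonneg (by simpa using hij)]
  rw [hdist (kStep_le_kStep h a b), hdist (kStep_le_kStep h b a), hdist h.le]
  have ha : (kStep k' a : ℝ) + k ≤ kStep k a + k' := by exact_mod_cast kStep_add_le_add_kStep h.le a
  have hb : (kStep k' b : ℝ) + k ≤ kStep k b + k' := by exact_mod_cast kStep_add_le_add_kStep h.le b
  linarith

noncomputable def meanStepDist (n k k' : ℕ) : ℝ :=
  (∑ a : Fin (n + 2), ∑ b : Fin (n + 2), dist (kStep k a) (kStep k' b)) / (n + 2) ^ 2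

theorem meanStepDist_comm (n k k' : ℕ) : meanStepDist n k k' = meanStepDist n k' k := by
  rw [meanStepDist, meanStepDist, Finset.sum_comm]
  simp_rw [dist_comm]

theorem meanStepDist_le_of_lt (n : ℕ) {k k' : ℕ} (h : k < k') :
    meanStepDist n k k' ≤ dist k k' := by
  rw [meanStepDist, div_le_iff₀ (by positivity), mul_comm]
  simpa using sum_sum_le_card_sq_mul_of_add_swap_le
    (fun a b : Fin (n + 2) => dist_kStep_add_dist_kStep_swap_le h a b)

theorem meanStepDist_le_dist (n : ℕ) {k k' : ℕ} (h : k ≠ k') :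
    meanStepDist n k k' ≤ dist k k' := by
  rcases h.lt_or_gt with h | h
  · exact meanStepDist_le_of_lt n h
  · rw [meanStepDist_comm, dist_comm]
    exact meanStepDist_le_of_lt n h

def take (n : ℕ) (x : EulerPath) : ∀ i : Fin n, Fin (i + 2) := fun i => x i

theorem take_eq_take_iff {n : ℕ} {x y : EulerPath} :
    take n x = take n y ↔ ∀ i < n, x i = y i := by
  simp [take, funext_iff, Fin.forall_iff]

theorem measurable_take (n : ℕ) : Measurable (take n) := by
  unfold take; fun_prop

theorem take_fiber_inter_eval_fiber (n : ℕ) (c : EulerPath) (a : Fin (n + 2)) :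
    take n ⁻¹' {take n c} ∩ (fun x : EulerPath => x n) ⁻¹' {a} =
      take (n + 1) ⁻¹' {take (n + 1) (Function.update c n a)} := by
  ext x
  simp only [Set.mem_inter_iff, Set.mem_preimage, Set.mem_singleton_iff, take_eq_take_iff]
  constructor
  · rintro ⟨h, rfl⟩ i hi
    rcases Nat.lt_succ_iff_lt_or_eq.1 hi with hi | rfl
    · rw [Function.update_of_ne hi.ne, h i hi]
    · rw [Function.update_self]
  · intro h
    refine ⟨fun i hi => ?_, ?_⟩
    · rw [h i (by omega), Function.update_of_ne hi.ne]
    · rw [h n (by omega), Function.update_self]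

theorem kv_eq_of_take_eq {x y : EulerPath} : ∀ {n : ℕ}, take n x = take n y → kv x n = kv y n
  | 0, _ => rfl
  | n + 1, h => by
    rw [take_eq_take_iff] at h
    rw [kv_succ, kv_succ, kv_eq_of_take_eq (take_eq_take_iff.2 fun i hi => h i (by omega)),
      h n n.lt_succ_self]

theorem factorsThrough_kv_pair {γ : Type*} (n : ℕ) (F : ℕ → ℕ → γ) :
    (fun p : EulerPath × EulerPath => F (kv p.1 n) (kv p.2 n)).FactorsThrough
      (Prod.map (take n) (take n)) := by
  intro p p' h
  simp only [Prod.map, Prod.ext_iff] at h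
  simp only [kv_eq_of_take_eq h.1, kv_eq_of_take_eq h.2]

theorem D_eq_dist (n : ℕ) (p : EulerPath × EulerPath) : D n p = dist (kv p.1 n) (kv p.2 n) := by
  simp [D, Nat.dist_eq]

theorem integrable_D (η : Measure EulerPath) [IsFiniteMeasure η] (n : ℕ) :
    Integrable (D n) (η.prod η) := by
  rw [funext (D_eq_dist n)]
  exact (factorsThrough_kv_pair n dist).integrable ((measurable_take n).prodMap (measurable_take n))

theorem pairAlg_eq_comap (n : ℕ) :
    pairAlg n = MeasurableSpace.comap (Prod.map (take n) (take n)) inferInstance := by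
  apply le_antisymm
  · refine iSup_le fun i => ?_
    rw [show (fun p : EulerPath × EulerPath => (p.1 i, p.2 i)) =
      (fun q => (q.1 i, q.2 i)) ∘ Prod.map (take n) (take n) from rfl,
      ← MeasurableSpace.comap_comp]
    exact MeasurableSpace.comap_mono Measurable.of_discrete.comap_le
  · have hcoord (i : Fin n) :
        Measurable[pairAlg n] fun p : EulerPath × EulerPath => (p.1 i, p.2 i) :=
      Measurable.of_comap_le (le_iSup (fun i : Fin n =>
        MeasurableSpace.comap (fun p : EulerPath × EulerPath => (p.1 i, p.2 i)) inferInstance) i)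
    refine Measurable.comap_le (Measurable.prodMk ?_ ?_)
    · exact @measurable_pi_lambda _ _ _ (pairAlg n) _ _ fun i => measurable_fst.comp (hcoord i)
    · exact @measurable_pi_lambda _ _ _ (pairAlg n) _ _ fun i => measurable_snd.comp (hcoord i)

end EulerPath

open EulerPath

namespace IsSymmetricMeasure

variable {η : Measure EulerPath}

theorem measure_take_fiber (hη : IsSymmetricMeasure η) (n : ℕ) (c : EulerPath) :
    η (take n ⁻¹' {take n c}) = ∏ i ∈ Finset.range n, ((i : ℝ≥0∞) + 2)⁻¹ := by
  convert hη.2 n c using 2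
  ext x
  exact take_eq_take_iff

theorem measureReal_take_fiber_inter_eval_fiber (hη : IsSymmetricMeasure η) (n : ℕ)
    (c : EulerPath) (a : Fin (n + 2)) :
    η.real (take n ⁻¹' {take n c} ∩ (fun x : EulerPath => x n) ⁻¹' {a}) =
      η.real (take n ⁻¹' {take n c}) / (n + 2) := by
  rw [take_fiber_inter_eval_fiber, measureReal_def, measureReal_def, hη.measure_take_fiber,
    hη.measure_take_fiber, Finset.prod_range_succ, ENNReal.toReal_mul, ENNReal.toReal_inv,
    div_eq_mul_inv]
  norm_cast

theorem setIntegral_D_succ_take_fiber (hη : IsSymmetricMeasure η) (n : ℕ)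
    (q : EulerPath × EulerPath) :
    ∫ p in Prod.map (take n) (take n) ⁻¹' {Prod.map (take n) (take n) q}, D (n + 1) p ∂(η.prod η) =
      (η.prod η).real (Prod.map (take n) (take n) ⁻¹' {Prod.map (take n) (take n) q}) *
        meanStepDist n (kv q.1 n) (kv q.2 n) := by
  have := hη.1
  set A := take n ⁻¹' {take n q.1}
  set B := take n ⁻¹' {take n q.2}
  have hA : MeasurableSet A := measurable_take n (measurableSet_singleton _)
  have hB : MeasurableSet B := measurable_take n (measurableSet_singleton _)
  set e : EulerPath × EulerPath → Fin (n + 2) × Fin (n + 2) := Prod.map (· n) (· n)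
  have he : Measurable e := by fun_prop
  have hpiece (a b : Fin (n + 2)) : (A ×ˢ B) ∩ e ⁻¹' {(a, b)} =
      (A ∩ (fun x : EulerPath => x n) ⁻¹' {a}) ×ˢ (B ∩ (fun x : EulerPath => x n) ⁻¹' {b}) := by
    rw [← Set.singleton_prod_singleton, Set.preimage_prod_map_prod, Set.prod_inter_prod]
  have hD (a b : Fin (n + 2)) : Set.EqOn (D (n + 1))
      (fun _ => dist (kStep (kv q.1 n) a) (kStep (kv q.2 n) b)) ((A ×ˢ B) ∩ e ⁻¹' {(a, b)}) := by
    rintro p hp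
    rw [hpiece] at hp
    obtain ⟨⟨hp1, rfl⟩, hp2, rfl⟩ := hp
    rw [D_eq_dist, kv_succ, kv_succ, kv_eq_of_take_eq hp1, kv_eq_of_take_eq hp2]
  rw [show Prod.map (take n) (take n) q = (take n q.1, take n q.2) from rfl,
    ← Set.singleton_prod_singleton, Set.preimage_prod_map_prod,
    setIntegral_eq_sum_setIntegral_inter_fiber he (integrable_D η (n + 1))
      (hA.prod hB), Fintype.sum_prod_type]
  calc ∑ a, ∑ b, ∫ p in (A ×ˢ B) ∩ e ⁻¹' {(a, b)}, D (n + 1) p ∂(η.prod η)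
      = ∑ a : Fin (n + 2), ∑ b : Fin (n + 2), η.real A / (n + 2) * (η.real B / (n + 2)) *
          dist (kStep (kv q.1 n) a) (kStep (kv q.2 n) b) := by
        refine Finset.sum_congr rfl fun a _ => Finset.sum_congr rfl fun b _ => ?_
        rw [setIntegral_congr_fun ((hA.prod hB).inter (he (measurableSet_singleton _))) (hD a b),
          setIntegral_const, smul_eq_mul, hpiece, measureReal_prod_prod,
          hη.measureReal_take_fiber_inter_eval_fiber, hη.measureReal_take_fiber_inter_eval_fiber]
    _ = _ := by
        simp only [measureReal_prod_prod, meanStepDist, Finset.sum_div, Finset.mul_sum]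
        refine Finset.sum_congr rfl fun a _ => Finset.sum_congr rfl fun b _ => ?_
        field_simp
        ring

end IsSymmetricMeasure

/-- At every time at which the two paths are at distinct vertices, the vertex-distance
process satisfies the supermartingale inequality: `ρ`-a.e. on `{D_n > 0}` one has
`E_ρ[D_{n+1} | G_n] ≤ D_n`. -/
theorem euler_distance_supermartingale_inequality
    (η : Measure EulerPath) (hη : IsSymmetricMeasure η) (n : ℕ) :
    ∀ᵐ p ∂(η.prod η), 0 < D n p →
      MeasureTheory.condExp (pairAlg n) (η.prod η) (D (n + 1)) p ≤ D n p := by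
  have := hη.1
  have hcond : (η.prod η)[D (n + 1) | pairAlg n] =ᵐ[η.prod η]
      fun p => meanStepDist n (kv p.1 n) (kv p.2 n) := by
    rw [pairAlg_eq_comap]
    exact condExp_comap_ae_eq_of_setIntegral_fiber
      ((measurable_take n).prodMap (measurable_take n)) (integrable_D η (n + 1))
      (factorsThrough_kv_pair n _) (hη.setIntegral_D_succ_take_fiber n)
  filter_upwards [hcond] with p hp hpos
  rw [hp, D_eq_dist]
  exact meanStepDist_le_dist n fun h => by simp [D_eq_dist, h] at hpos
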